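/- For every typed monoid T = (M, G, E), the relation ∼_T on M, defined by s₁ ∼_T s₂ iff for all x, y ∈ M and all A ∈ G one has x s₁ y ∈ A ⟺ x s₂ y ∈ A, is a typed congruence over T, and the typed quotient T/∼_T (the minimal reduced monoid of T) is reduced. -/
import Mathlib


universe u v w

/-- A typed monoid structure on a monoid `M`: a Boolean algebra `types` of subsets of `M`
(the types) together with a finite set `units` of units. -/
structure TypedMonoidOn (M : Type u) : Type u where
  types : Set (Set M)
  units : Set M
  empty_mem : ∅ ∈ types
  univ_mem : Set.univ ∈ types
  union_mem : ∀ {A B : Set M}, A ∈ types → B ∈ types → A ∪ B ∈ types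
  inter_mem : ∀ {A B : Set M}, A ∈ types → B ∈ types → A ∩ B ∈ types
  compl_mem : ∀ {A : Set M}, A ∈ types → Aᶜ ∈ types
  units_finite : units.Finite

/-- A typed monoid homomorphism: a monoid homomorphism `h₁`, a Boolean algebra
homomorphism `h₂` on types, and a map `h₃` on units, such that
`h₁(A) = h₂(A) ∩ h₁(S)` for every type `A` and `h₁(e) = h₃(e)` for every unit `e`. -/
structure TypedHom {S : Type u} {T : Type v} [Monoid S] [Monoid T]
    (T₁ : TypedMonoidOn S) (T₂ : TypedMonoidOn T) where
  h₁ : S →* T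
  h₂ : Set S → Set T
  h₃ : S → T
  h₂_mem : ∀ {A : Set S}, A ∈ T₁.types → h₂ A ∈ T₂.types
  h₂_empty : h₂ ∅ = ∅
  h₂_univ : h₂ Set.univ = Set.univ
  h₂_union : ∀ {A B : Set S}, A ∈ T₁.types → B ∈ T₁.types → h₂ (A ∪ B) = h₂ A ∪ h₂ B
  h₂_inter : ∀ {A B : Set S}, A ∈ T₁.types → B ∈ T₁.types → h₂ (A ∩ B) = h₂ A ∩ h₂ B
  h₂_compl : ∀ {A : Set S}, A ∈ T₁.types → h₂ Aᶜ = (h₂ A)ᶜ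
  h₃_mem : ∀ {e : S}, e ∈ T₁.units → h₃ e ∈ T₂.units
  cond_i : ∀ {A : Set S}, A ∈ T₁.types → ⇑h₁ '' A = h₂ A ∩ Set.range ⇑h₁
  cond_ii : ∀ {e : S}, e ∈ T₁.units → h₁ e = h₃ e

/-- A typed monoid homomorphism is injective if all three components are. -/
def TypedHom.IsInjective {S : Type u} {T : Type v} [Monoid S] [Monoid T]
    {T₁ : TypedMonoidOn S} {T₂ : TypedMonoidOn T} (h : TypedHom T₁ T₂) : Prop :=
  Function.Injective h.h₁ ∧ Set.InjOn h.h₂ T₁.types ∧ Set.InjOn h.h₃ T₁.units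

/-- A typed monoid homomorphism is surjective if all three components are. -/
def TypedHom.IsSurjective {S : Type u} {T : Type v} [Monoid S] [Monoid T]
    {T₁ : TypedMonoidOn S} {T₂ : TypedMonoidOn T} (h : TypedHom T₁ T₂) : Prop :=
  Function.Surjective h.h₁ ∧ T₂.types ⊆ h.h₂ '' T₁.types ∧ T₂.units ⊆ h.h₃ '' T₁.units

/-- A typed monoid homomorphism is bijective if all three components are. -/
def TypedHom.IsBijective {S : Type u} {T : Type v} [Monoid S] [Monoid T]
    {T₁ : TypedMonoidOn S} {T₂ : TypedMonoidOn T} (h : TypedHom T₁ T₂) : Prop :=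
  h.IsInjective ∧ h.IsSurjective

/-- `T₁` divides `T₂` if some typed submonoid of `T₂` (i.e. a typed monoid admitting an
injective typed homomorphism into `T₂`) surjects onto `T₁` by a typed homomorphism. -/
def TypedDivides {S : Type u} {T : Type v} [Monoid S] [Monoid T]
    (T₁ : TypedMonoidOn S) (T₂ : TypedMonoidOn T) : Prop :=
  ∃ (U : Type v) (_iU : Monoid U) (T' : TypedMonoidOn U)
    (hinj : TypedHom T' T₂) (hsur : TypedHom T' T₁),
    hinj.IsInjective ∧ hsur.IsSurjective

/-- The typed monoid `(Σ*, B_L, Σ)` associated with a language `L` over a finite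
alphabet `A`: the free monoid with the Boolean algebra `{∅, L, Lᶜ, Σ*}` of types
and the letters as units. -/
def langTM (A : Type u) [Fintype A] (L : Set (FreeMonoid A)) :
    TypedMonoidOn (FreeMonoid A) where
  types := {∅, L, Lᶜ, Set.univ}
  units := Set.range FreeMonoid.of
  empty_mem := by simp
  univ_mem := by simp
  union_mem := by
    rintro A B (rfl | rfl | rfl | rfl) (rfl | rfl | rfl | rfl) <;>
      simp [Set.union_self, Set.union_compl_self, Set.compl_union_self,
        Set.empty_union, Set.union_empty, Set.univ_union, Set.union_univ]
  inter_mem := by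
    rintro A B (rfl | rfl | rfl | rfl) (rfl | rfl | rfl | rfl) <;>
      simp [Set.inter_self, Set.inter_compl_self, Set.compl_inter_self,
        Set.empty_inter, Set.inter_empty, Set.univ_inter, Set.inter_univ]
  compl_mem := by
    rintro A (rfl | rfl | rfl | rfl) <;> simp
  units_finite := Set.finite_range _

/-- A typed monoid recognizes a language `L ⊆ Σ*` if there is a typed monoid
homomorphism from `(Σ*, B_L, Σ)` to it. -/
def Recognizes {M : Type u} [Monoid M] (T : TypedMonoidOn M)
    {A : Type v} [Fintype A] (L : Set (FreeMonoid A)) : Prop :=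
  Nonempty (TypedHom (langTM A L) T)

/-- For every typed monoid `T = (M, G, E)`, the relation `s₁ ∼_T s₂` iff
`∀ x y, ∀ A ∈ G, x s₁ y ∈ A ↔ x s₂ y ∈ A` is a typed congruence over `T`, and the
typed quotient `T/∼_T` (the minimal reduced monoid of `T`) is reduced: the analogous
relation on the quotient is equality. -/
theorem minimal_reduced_monoid {M : Type u} [Monoid M] (T : TypedMonoidOn M) :
    ∃ c : Con M,
      (∀ s₁ s₂ : M, c s₁ s₂ ↔
        ∀ x y : M, ∀ A ∈ T.types, (x * s₁ * y ∈ A ↔ x * s₂ * y ∈ A)) ∧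
      (∀ A ∈ T.types, ∀ s₁ s₂ : M, c s₁ s₂ → s₁ ∈ A → s₂ ∈ A) ∧
      ∃ T' : TypedMonoidOn c.Quotient,
        T'.types = (fun A => ⇑c.mk' '' A) '' T.types ∧
        T'.units = ⇑c.mk' '' T.units ∧
        ∀ u v : c.Quotient,
          (∀ x y : c.Quotient, ∀ A ∈ T'.types, (x * u * y ∈ A ↔ x * v * y ∈ A)) →
          u = v := by
  classical
  set r : M → M → Prop := fun s₁ s₂ =>
    ∀ x y : M, ∀ A ∈ T.types, (x * s₁ * y ∈ A ↔ x * s₂ * y ∈ A) with hr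
  have hrefl : ∀ s, r s s := fun s x y A _ => Iff.rfl
  have hsymm : ∀ {a b}, r a b → r b a := fun h x y A hA => (h x y A hA).symm
  have htrans : ∀ {a b c'}, r a b → r b c' → r a c' :=
    fun h1 h2 x y A hA => (h1 x y A hA).trans (h2 x y A hA)
  have hmul : ∀ {a b c' d}, r a b → r c' d → r (a * c') (b * d) := by
    intro a b c' d h1 h2 x y A hA
    have e1 : x * (a * c') * y = x * a * (c' * y) := by
      simp [mul_assoc]
    have e2 : x * (b * d) * y = (x * b) * d * y := by
      simp [mul_assoc]
    have e3 : x * b * (c' * y) = (x * b) * c' * y := by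
      simp [mul_assoc]
    rw [e1, e2, h1 x (c' * y) A hA, e3, h2 (x * b) y A hA]
  set c : Con M :=
    { r := r
      iseqv := ⟨hrefl, hsymm, htrans⟩
      mul' := hmul } with hc
  have hsat : ∀ A ∈ T.types, ∀ s₁ s₂ : M, c s₁ s₂ → s₁ ∈ A → s₂ ∈ A := by
    intro A hA s₁ s₂ h h1
    have := h 1 1 A hA
    simpa using this.mp (by simpa using h1)
  -- saturation: mk s ∈ image of A ↔ s ∈ A
  have hmem : ∀ A ∈ T.types, ∀ s : M, (c.mk' s ∈ ⇑c.mk' '' A ↔ s ∈ A) := by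
    intro A hA s
    constructor
    · rintro ⟨a, ha, hEq⟩
      exact hsat A hA a s (c.eq.mp hEq) ha
    · intro hs; exact ⟨s, hs, rfl⟩
  have hsurj : Function.Surjective (⇑c.mk' : M → c.Quotient) := Con.mk'_surjective
  refine ⟨c, fun s₁ s₂ => Iff.rfl, hsat, ?_⟩
  refine ⟨{ types := (fun A => ⇑c.mk' '' A) '' T.types
            units := ⇑c.mk' '' T.units
            empty_mem := ⟨∅, T.empty_mem, by simp⟩
            univ_mem := ⟨Set.univ, T.univ_mem, by
              simpa using Set.image_univ_of_surjective hsurj⟩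
            union_mem := ?_
            inter_mem := ?_
            compl_mem := ?_
            units_finite := T.units_finite.image _ }, rfl, rfl, ?_⟩
  · rintro _ _ ⟨A, hA, rfl⟩ ⟨B, hB, rfl⟩
    exact ⟨A ∪ B, T.union_mem hA hB, Set.image_union _ _ _⟩
  · rintro _ _ ⟨A, hA, rfl⟩ ⟨B, hB, rfl⟩
    refine ⟨A ∩ B, T.inter_mem hA hB, ?_⟩
    ext z
    obtain ⟨s, rfl⟩ := hsurj z
    simp only [hmem A hA, hmem B hB, hmem _ (T.inter_mem hA hB), Set.mem_inter_iff]
  · rintro _ ⟨A, hA, rfl⟩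
    refine ⟨Aᶜ, T.compl_mem hA, ?_⟩
    ext z
    obtain ⟨s, rfl⟩ := hsurj z
    simp only [hmem _ (T.compl_mem hA), hmem A hA, Set.mem_compl_iff]
  · intro u v h
    obtain ⟨s₁, rfl⟩ := hsurj u
    obtain ⟨s₂, rfl⟩ := hsurj v
    refine c.eq.mpr ?_
    intro x y A hA
    have := h (c.mk' x) (c.mk' y) (⇑c.mk' '' A) ⟨A, hA, rfl⟩
    have e1 : c.mk' x * c.mk' s₁ * c.mk' y = c.mk' (x * s₁ * y) := by
      simp [map_mul]
    have e2 : c.mk' x * c.mk' s₂ * c.mk' y = c.mk' (x * s₂ * y) := by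
      simp [map_mul]
    rw [e1, e2, hmem A hA, hmem A hA] at this
    exact this
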